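/- arXiv:1403.0126 — 9 statements merged into one kernel-verified Lean document; each statement's English description precedes it below -/
import Mathlib

section
/- Let q be a prime power, let E be an elliptic curve defined over F_q, and let T_2 be the trace zero subgroup of E(F_{q^2}). Then T_2 = {(X,Y) ∈ E(F_{q^2}) : X ∈ F_q and Y ∉ F_q} ∪ E[2](F_q), where E[2](F_q) denotes the set of F_q-rational points P of E with 2P = O. -/
/-!
The point `P = (x, y)` and its conjugate `φ P` have the same `x`-coordinate exactly when `x` is
fixed by `φ`, and then `φ P = ±P`, since these are the only points with that `x`-coordinate.
If `φ P = P`, the point is `F_q`-rational by Galois descent and `P + φ P = 2P`; otherwise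
`P + φ P = 0` holds exactly when `x` is fixed but `y` is not. Here "fixed by `φ`" means
"in `F_q`", as `F_q` already supplies all `q` roots of `X ^ q - X`.
-/

open WeierstrassCurve.Affine

open Polynomial in
lemma mem_range_algebraMap_iff_pow_card_eq {F K : Type*} [Field F] [Fintype F] [Field K]
    [Algebra F K] {x : K} : x ∈ Set.range (algebraMap F K) ↔ x ^ Fintype.card F = x := by
  refine ⟨by rintro ⟨a, rfl⟩; rw [← map_pow, FiniteField.pow_card], fun hx ↦ ?_⟩
  have hq : 1 < Fintype.card F := Fintype.one_lt_card
  have hsplit : (X ^ Fintype.card F - X : F[X]).Splits := by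
    rw [splits_iff_card_roots, FiniteField.roots_X_pow_card_sub_X,
      FiniteField.X_pow_card_sub_X_natDegree_eq F hq]
    rfl
  exact hsplit.mem_range_of_isRoot (FiniteField.X_pow_card_sub_X_ne_zero F hq) (by simp [hx])

namespace WeierstrassCurve.Affine.Point

variable {F K : Type*} [Field F] [Field K] [Algebra F K] {W : Affine F} (σ : K →ₐ[F] K)
  [DecidableEq K]

lemma map_some_eq_self_iff {x y : K} (h : (W⁄K).Nonsingular x y) :
    map σ (some _ _ h) = some _ _ h ↔ σ x = x ∧ σ y = y := by
  rw [map_some, some.injEq]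

lemma map_some_eq_or_eq_neg {x y : K} (h : (W⁄K).Nonsingular x y) (hx : σ x = x) :
    map σ (some _ _ h) = some _ _ h ∨ map σ (some _ _ h) = -some _ _ h := by
  rw [map_some]
  exact X_eq_iff.mp hx

lemma map_some_eq_neg_iff_of_ne {x y : K} (h : (W⁄K).Nonsingular x y)
    (hP : map σ (some _ _ h) ≠ some _ _ h) : map σ (some _ _ h) = -some _ _ h ↔ σ x = x := by
  refine ⟨fun hP' ↦ ?_, fun hx ↦ (map_some_eq_or_eq_neg σ h hx).resolve_left hP⟩
  rw [map_some, neg_some, some.injEq] at hP'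
  exact hP'.1

lemma baseChange_some_eq_some_iff [DecidableEq F] {x₀ y₀ : F} (h₀ : (W⁄F).Nonsingular x₀ y₀)
    {x y : K} (h : (W⁄K).Nonsingular x y) :
    baseChange F K (some _ _ h₀) = some _ _ h ↔ algebraMap F K x₀ = x ∧ algebraMap F K y₀ = y := by
  rw [baseChange, map_some, some.injEq]
  rfl

lemma map_eq_self_iff_exists_baseChange_eq [DecidableEq F]
    (hσ : ∀ x, σ x = x ↔ x ∈ Set.range (algebraMap F K)) (P : (W⁄K).Point) :
    map σ P = P ↔ ∃ P₀ : (W⁄F).Point, baseChange F K P₀ = P := by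
  rcases P with _ | ⟨x, y, h⟩
  · exact ⟨fun _ ↦ ⟨0, map_zero _⟩, fun _ ↦ map_zero _⟩
  rw [map_some_eq_self_iff, hσ, hσ]
  constructor
  · rintro ⟨⟨x₀, rfl⟩, ⟨y₀, rfl⟩⟩
    have h₀ := (W.baseChange_nonsingular (Algebra.ofId F K).injective x₀ y₀).mp h
    exact ⟨some _ _ h₀, (baseChange_some_eq_some_iff h₀ h).mpr ⟨rfl, rfl⟩⟩
  · rintro ⟨_ | ⟨x₀, y₀, h₀⟩, hP⟩
    · cases hP
    · obtain ⟨rfl, rfl⟩ := (baseChange_some_eq_some_iff h₀ h).mp hP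
      exact ⟨⟨x₀, rfl⟩, ⟨y₀, rfl⟩⟩

lemma add_map_eq_zero_iff [DecidableEq F]
    (hσ : ∀ x, σ x = x ↔ x ∈ Set.range (algebraMap F K)) (P : (W⁄K).Point) :
    P + map σ P = 0 ↔
      ((∃ (X Y : K) (h : (W⁄K).Nonsingular X Y),
          P = some _ _ h ∧ X ∈ Set.range (algebraMap F K) ∧ Y ∉ Set.range (algebraMap F K)) ∨
        ((∃ P₀ : (W⁄F).Point, baseChange F K P₀ = P) ∧ 2 • P = 0)) := by
  rw [← map_eq_self_iff_exists_baseChange_eq σ hσ, add_eq_zero_iff_eq_neg']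
  by_cases hfix : map σ P = P
  · rw [hfix, two_nsmul, add_eq_zero_iff_eq_neg, or_iff_right, and_iff_right rfl]
    rintro ⟨X, Y, h, rfl, -, hY⟩
    exact hY ((hσ Y).mp ((map_some_eq_self_iff σ h).mp hfix).2)
  · rcases P with _ | ⟨x, y, h⟩
    · exact absurd (map_zero _) hfix
    simp only [map_some_eq_neg_iff_of_ne σ h hfix, hfix, false_and, or_false, some.injEq, ← hσ]
    constructor
    · intro hx
      exact ⟨x, y, h, ⟨rfl, rfl⟩, hx, fun hy ↦ hfix ((map_some_eq_self_iff σ h).mpr ⟨hx, hy⟩)⟩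
    · rintro ⟨_, _, _, ⟨rfl, rfl⟩, hx, -⟩
      exact hx

end WeierstrassCurve.Affine.Point

open Classical in
theorem traceZero_quadratic_eq_general
    {Fq K : Type*} [Field Fq] [Fintype Fq] [Field K] [Algebra Fq K]
    (W : WeierstrassCurve.Affine Fq)
    (φ : K →ₐ[Fq] K) (hφ : ∀ x : K, φ x = x ^ Fintype.card Fq)
    (P : (W⁄K).Point) :
    P + Point.map (W' := W) φ P = 0 ↔
      ((∃ (X Y : K) (h : (W.baseChange K).toAffine.Nonsingular X Y),
          P = Point.some _ _ h ∧ X ∈ Set.range (algebraMap Fq K) ∧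
            Y ∉ Set.range (algebraMap Fq K)) ∨
        ((∃ P₀ : (W⁄Fq).Point, Point.baseChange (W' := W) Fq K P₀ = P) ∧ 2 • P = 0)) :=
  Point.add_map_eq_zero_iff φ
    (fun x ↦ by rw [hφ, mem_range_algebraMap_iff_pow_card_eq]) P

open Classical in
/-- Let `E` be an elliptic curve over `F_q` and `T_2` the trace zero subgroup of
`E(F_{q²})`, i.e. the kernel of `P ↦ P + φ(P)` where `φ` is the `q`-power Frobenius. Then
`T_2 = {(X,Y) ∈ E(F_{q²}) : X ∈ F_q, Y ∉ F_q} ∪ E[2](F_q)`, where `E[2](F_q)` is the set of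
`F_q`-rational points `P` with `2P = O`. -/
theorem traceZero_quadratic_eq
    {Fq K : Type*} [Field Fq] [Fintype Fq] [Field K] [Fintype K] [Algebra Fq K]
    (hcard : Fintype.card K = Fintype.card Fq ^ 2)
    (W : WeierstrassCurve.Affine Fq) (hΔ : W.Δ ≠ 0)
    (φ : K →ₐ[Fq] K) (hφ : ∀ x : K, φ x = x ^ Fintype.card Fq)
    (P : (W⁄K).Point) :
    P + Point.map (W' := W) φ P = 0 ↔
      ((∃ (X Y : K) (h : (W.baseChange K).toAffine.Nonsingular X Y),
          P = Point.some _ _ h ∧ X ∈ Set.range (algebraMap Fq K) ∧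
            Y ∉ Set.range (algebraMap Fq K)) ∨
        ((∃ P₀ : (W⁄Fq).Point, Point.baseChange (W' := W) Fq K P₀ = P) ∧ 2 • P = 0)) :=
  traceZero_quadratic_eq_general W φ hφ P
end

section
/- Let E be an elliptic curve over F_q, let n ≥ 1 and let k be an integer with 0 ≤ 2k ≤ n. Let Q ∈ E(F_q) satisfy (n−2k)Q = O, and let R ∈ E(F_{q^n}) satisfy 2R = O and R + φ(R) + … + φ^{n-1}(R) = O. Then the point P = Q + R satisfies P + φ(P) + … + φ^{n-2k-1}(P) + φ^{n-2k}(P) − φ^{n-2k+1}(P) + … + (−1)^{2k-1} φ^{n-1}(P) = O, i.e. the sum of the first n−2k Frobenius conjugates of P plus the alternating-sign sum of the remaining 2k Frobenius conjugates (starting with sign +) equals O. -/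
/-!
Since `φ` fixes `Q`, every conjugate `φⁱ(Q + R)` splits as `Q + φⁱ(R)`. The `Q`-parts
contribute `(n - 2k) • Q` plus an alternating sum of even length, both zero. The conjugates
of `R` are `2`-torsion, so the signs in front of them disappear and the `R`-parts add up to
the full trace `R + φ(R) + ⋯ + φⁿ⁻¹(R) = O`.
-/

open Finset WeierstrassCurve.Affine

section AddCommGroup

variable {G : Type*} [AddCommGroup G]

theorem neg_one_pow_zsmul_of_two_nsmul_eq_zero {x : G} (hx : 2 • x = 0) (i : ℕ) :
    (-1 : ℤ) ^ i • x = x := by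
  rcases neg_one_pow_eq_or ℤ i with h | h
  · rw [h, one_smul]
  · rw [h, neg_one_zsmul, neg_eq_iff_add_eq_zero, ← two_nsmul, hx]

theorem sum_range_two_mul_neg_one_pow_zsmul (x : G) (m : ℕ) :
    ∑ i ∈ range (2 * m), (-1 : ℤ) ^ i • x = 0 := by
  induction m with
  | zero => simp
  | succ m ih =>
    rw [Nat.mul_succ, sum_range_succ, sum_range_succ, ih, pow_succ, zero_add, mul_neg_one,
      neg_smul, add_neg_cancel]

namespace AddMonoidHom

variable (f : G →+ G)

theorem iterate_add_of_map_eq_self {Q : G} (hQ : f Q = Q) (R : G) (i : ℕ) :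
    (⇑f)^[i] (Q + R) = Q + (⇑f)^[i] R := by
  rw [iterate_map_add, Function.iterate_fixed hQ]

theorem two_nsmul_iterate_eq_zero {R : G} (hR : 2 • R = 0) (i : ℕ) :
    2 • (⇑f)^[i] R = 0 := by
  rw [← iterate_map_nsmul, hR, iterate_map_zero]

theorem sum_iterate_add_alternating_sum_iterate_eq_zero {a b : ℕ} {Q R : G} (hQ : f Q = Q)
    (hQtor : a • Q = 0) (hR2 : 2 • R = 0)
    (hRtr : ∑ i ∈ Finset.range (a + 2 * b), (⇑f)^[i] R = 0) :
    ∑ i ∈ Finset.range a, (⇑f)^[i] (Q + R) +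
      ∑ i ∈ Finset.range (2 * b), (-1 : ℤ) ^ i • (⇑f)^[a + i] (Q + R) = 0 :=
  calc _ = (a • Q + ∑ i ∈ Finset.range (2 * b), (-1 : ℤ) ^ i • Q) +
          (∑ i ∈ Finset.range a, (⇑f)^[i] R +
            ∑ i ∈ Finset.range (2 * b), (⇑f)^[a + i] R) := by
        simp only [f.iterate_add_of_map_eq_self hQ, smul_add,
          neg_one_pow_zsmul_of_two_nsmul_eq_zero (f.two_nsmul_iterate_eq_zero hR2 _),
          sum_add_distrib, sum_const, Finset.card_range]
        abel
    _ = ∑ i ∈ Finset.range (a + 2 * b), (⇑f)^[i] R := by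
        rw [hQtor, sum_range_two_mul_neg_one_pow_zsmul, zero_add, zero_add, sum_range_add]
    _ = 0 := hRtr

end AddMonoidHom

end AddCommGroup

open Classical in
theorem sum_frobenius_conjugates_alternating_eq_zero_general
    {Fq K : Type*} [Field Fq] [Field K] [Algebra Fq K]
    {n : ℕ}
    (W : WeierstrassCurve.Affine Fq)
    (φ : K →ₐ[Fq] K)
    (k : ℕ) (hk : 2 * k ≤ n)
    (Q R : (W⁄K).Point)
    (hQrat : Point.map (W' := W) φ Q = Q)
    (hQtor : (n - 2 * k) • Q = 0)
    (hR2 : 2 • R = 0)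
    (hRtr : ∑ i ∈ Finset.range n, (⇑(Point.map (W' := W) φ))^[i] R = 0) :
    ∑ i ∈ Finset.range (n - 2 * k), (⇑(Point.map (W' := W) φ))^[i] (Q + R) +
      ∑ i ∈ Finset.range (2 * k),
        (-1 : ℤ) ^ i • (⇑(Point.map (W' := W) φ))^[n - 2 * k + i] (Q + R) = 0 :=
  (Point.map φ).sum_iterate_add_alternating_sum_iterate_eq_zero hQrat hQtor hR2
    (by rwa [Nat.sub_add_cancel hk])

open Classical in
/-- Let `E` be an elliptic curve over `F_q`, `n ≥ 1`, and `k` with `0 ≤ 2k ≤ n`.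
Let `Q ∈ E(F_q)` (viewed in `E(F_{q^n})`, so `φ(Q) = Q`) satisfy `(n−2k)Q = O`, and let
`R ∈ E(F_{q^n})` satisfy `2R = O` and `R + φ(R) + … + φ^{n-1}(R) = O`. Then `P = Q + R` satisfies
`P + φ(P) + … + φ^{n-2k-1}(P) + φ^{n-2k}(P) − φ^{n-2k+1}(P) + … + (−1)^{2k-1} φ^{n-1}(P) = O`. -/
theorem sum_frobenius_conjugates_alternating_eq_zero
    {Fq K : Type*} [Field Fq] [Fintype Fq] [Field K] [Fintype K] [Algebra Fq K]
    {n : ℕ} (hn : 1 ≤ n) (hcard : Fintype.card K = Fintype.card Fq ^ n)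
    (W : WeierstrassCurve.Affine Fq) (hΔ : W.Δ ≠ 0)
    (φ : K →ₐ[Fq] K) (hφ : ∀ x : K, φ x = x ^ Fintype.card Fq)
    (k : ℕ) (hk : 2 * k ≤ n)
    (Q R : (W⁄K).Point)
    (hQrat : Point.map (W' := W) φ Q = Q)
    (hQtor : (n - 2 * k) • Q = 0)
    (hR2 : 2 • R = 0)
    (hRtr : ∑ i ∈ Finset.range n, (⇑(Point.map (W' := W) φ))^[i] R = 0) :
    ∑ i ∈ Finset.range (n - 2 * k), (⇑(Point.map (W' := W) φ))^[i] (Q + R) +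
      ∑ i ∈ Finset.range (2 * k),
        (-1 : ℤ) ^ i • (⇑(Point.map (W' := W) φ))^[n - 2 * k + i] (Q + R) = 0 :=
  sum_frobenius_conjugates_alternating_eq_zero_general W φ k hk Q R hQrat hQtor hR2 hRtr
end

section
/- Let F_q be a finite field of characteristic different from 2 and 3, let E : y² = x³ + Ax + B be a smooth elliptic curve over F_q, and let T_3 be the trace zero subgroup of E(F_{q^3}). Then T_3 = { (X,Y) ∈ E(F_{q^3}) : f_3(X, X^q, X^{q^2}) = 0 } ∪ {O}, where f_3 is the third Semaev polynomial of E. -/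
/-!
Write `σ` for the Frobenius on `E(F_{q³})`; since `[F_{q³} : F_q] = 3`, `σ³ = 1`. For affine
points `P₁, P₂, P₃` of a short Weierstrass curve, `f₃(x(P₁), x(P₂), x(P₃)) = 0` exactly when
`P₁ ± P₂ = ±P₃` for some choice of signs: for `x(P₁) ≠ x(P₂)`, `(x₁ - x₂)² f₃(x₁, x₂, z)`
factors into two linear polynomials in `z` vanishing at `x(P₁ + P₂)` and `x(P₁ - P₂)`, and for
`x(P₁) = x(P₂)` it reduces to the doubling formula. Applied to `P, σP, σ²P`, any relation
`P ± σP = ±σ²P`, added to its two conjugates under `σ`, forces `P + σP + σ²P = 0`.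
-/

open WeierstrassCurve.Affine

/-- The third Semaev polynomial of the elliptic curve `y² = x³ + Ax + B`. -/
def semaev3 {R : Type*} [CommRing R] (A B z₁ z₂ z₃ : R) : R :=
  (z₁ - z₂) ^ 2 * z₃ ^ 2 - 2 * ((z₁ + z₂) * (z₁ * z₂ + A) + 2 * B) * z₃ +
    (z₁ * z₂ - A) ^ 2 - 4 * B * (z₁ + z₂)

lemma semaev3_self {R : Type*} [CommRing R] {A B x y : R} (hxy : y ^ 2 = x ^ 3 + A * x + B)
    (z : R) : semaev3 A B x x z = (3 * x ^ 2 + A) ^ 2 - 4 * y ^ 2 * (z + 2 * x) := by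
  simp only [semaev3]
  linear_combination (4 * z + 8 * x) * hxy

lemma sq_sub_mul_semaev3 {R : Type*} [CommRing R] {A B x₁ y₁ x₂ y₂ : R}
    (h₁ : y₁ ^ 2 = x₁ ^ 3 + A * x₁ + B) (h₂ : y₂ ^ 2 = x₂ ^ 3 + A * x₂ + B) (z : R) :
    (x₁ - x₂) ^ 2 * semaev3 A B x₁ x₂ z =
      ((x₁ - x₂) ^ 2 * (z + x₁ + x₂) - (y₁ - y₂) ^ 2) *
        ((x₁ - x₂) ^ 2 * (z + x₁ + x₂) - (y₁ + y₂) ^ 2) := by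
  simp only [semaev3]
  linear_combination
    (-B + 2 * y₂ ^ 2 - y₁ ^ 2 + 2 * x₂ ^ 2 * z + 2 * x₂ ^ 3 - x₁ * A - 4 * x₁ * x₂ * z
      - 2 * x₁ * x₂ ^ 2 + 2 * x₁ ^ 2 * z - 2 * x₁ ^ 2 * x₂ + x₁ ^ 3) * h₁ +
    (B - y₂ ^ 2 - x₂ * A + 2 * x₂ ^ 2 * z + x₂ ^ 3 + 2 * x₁ * A - 4 * x₁ * x₂ * z
      - 2 * x₁ * x₂ ^ 2 + 2 * x₁ ^ 2 * z - 2 * x₁ ^ 2 * x₂ + 4 * x₁ ^ 3) * h₂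

lemma AddMonoidHom.add_apply_add_apply_apply_eq_zero_iff {G : Type*} [AddCommGroup G]
    (σ : G →+ G) (hσ : ∀ x, σ (σ (σ x)) = x) (x : G) :
    x + σ x + σ (σ x) = 0 ↔
      (x + σ x = σ (σ x) ∨ x + σ x = -σ (σ x)) ∨ (x - σ x = σ (σ x) ∨ x - σ x = -σ (σ x)) := by
  refine ⟨fun h => Or.inl (Or.inr (eq_neg_of_add_eq_zero_left h)), ?_⟩
  rintro ((h | h) | h | h)
  case inl.inr => exact add_eq_zero_iff_eq_neg.mpr h
  all_goals
    have h' := congrArg σ h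
    have h'' := congrArg σ h'
    simp only [map_add, map_sub, map_neg, hσ] at h' h''
  · linear_combination (norm := module) h + h' + h''
  · linear_combination (norm := module) -(h + h' + h'')
  · linear_combination (norm := module) h + h' + h''

lemma FiniteField.pow_pow_pow_eq_self {K : Type*} [Field K] [Fintype K] {q : ℕ}
    (hcard : Fintype.card K = q ^ 3) (x : K) : ((x ^ q) ^ q) ^ q = x := by
  rw [← pow_mul, ← pow_mul, ← pow_three, ← hcard, FiniteField.pow_card]

namespace WeierstrassCurve.Affine

section ShortNF

variable {R : Type*} [CommRing R] {W : Affine R}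

lemma negY_of_isCharNeTwoNF [W.IsCharNeTwoNF] (x y : R) : W.negY x y = -y := by
  simp [negY]

variable [W.IsShortNF]

lemma addX_of_isShortNF (x₁ x₂ ℓ : R) : W.addX x₁ x₂ ℓ = ℓ ^ 2 - x₁ - x₂ := by
  simp [addX]

lemma equation_iff_of_isShortNF (x y : R) :
    W.Equation x y ↔ y ^ 2 = x ^ 3 + W.a₄ * x + W.a₆ := by
  simp [equation_iff]

lemma nonsingular_iff_of_isShortNF (x y : R) : W.Nonsingular x y ↔
    y ^ 2 = x ^ 3 + W.a₄ * x + W.a₆ ∧ (3 * x ^ 2 + W.a₄ ≠ 0 ∨ 2 * y ≠ 0) := by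
  rw [nonsingular_iff', equation_iff_of_isShortNF]
  simp only [a₁_of_isShortNF, a₂_of_isShortNF, a₃_of_isShortNF, zero_mul, mul_zero, add_zero,
    zero_sub, neg_ne_zero]

end ShortNF

namespace Point

section Field

variable {F : Type*} [Field F] [DecidableEq F] {W : Affine F}

lemma some_add_some_eq_or_eq_neg_iff {x₁ y₁ x₂ y₂ x₃ y₃ : F} {h₁ : W.Nonsingular x₁ y₁}
    {h₂ : W.Nonsingular x₂ y₂} {h₃ : W.Nonsingular x₃ y₃} :
    some _ _ h₁ + some _ _ h₂ = some _ _ h₃ ∨ some _ _ h₁ + some _ _ h₂ = -some _ _ h₃ ↔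
      ¬(x₁ = x₂ ∧ y₁ = W.negY x₂ y₂) ∧ W.addX x₁ x₂ (W.slope x₁ x₂ y₁ y₂) = x₃ := by
  by_cases hxy : x₁ = x₂ ∧ y₁ = W.negY x₂ y₂
  · simp [hxy, (some_ne_zero h₃).symm]
  · rw [add_some hxy, ← X_eq_iff]
    exact (and_iff_right hxy).symm

variable [W.IsShortNF]

lemma semaev3_self_eq_zero_iff {x y x₃ y₃ : F} (h : W.Nonsingular x y)
    (h₃ : W.Nonsingular x₃ y₃) : semaev3 W.a₄ W.a₆ x x x₃ = 0 ↔
      some _ _ h + some _ _ h = some _ _ h₃ ∨ some _ _ h + some _ _ h = -some _ _ h₃ := by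
  obtain ⟨hxy, hsing⟩ := (nonsingular_iff_of_isShortNF x y).mp h
  rw [some_add_some_eq_or_eq_neg_iff, semaev3_self hxy, negY_of_isCharNeTwoNF]
  by_cases hy : 2 * y = 0
  · have h3x : 3 * x ^ 2 + W.a₄ ≠ 0 := hsing.resolve_right (not_not.mpr hy)
    refine iff_of_false ?_ fun h => h.1 ⟨rfl, by linear_combination hy⟩
    rw [show 4 * y ^ 2 * (x₃ + 2 * x) = (2 * y) ^ 2 * (x₃ + 2 * x) by ring, hy]
    simpa using h3x
  · have hy' : y ≠ -y := fun h => hy (by linear_combination h)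
    rw [slope_of_Y_ne rfl (by rwa [negY_of_isCharNeTwoNF]), addX_of_isShortNF,
      negY_of_isCharNeTwoNF]
    simp only [hy', and_false, not_false_eq_true, true_and, a₁_of_isShortNF, a₂_of_isShortNF,
      zero_mul, mul_zero, add_zero, sub_zero, sub_neg_eq_add, ← two_mul]
    have hx₃ : ((3 * x ^ 2 + W.a₄) / (2 * y)) ^ 2 - x - x - x₃ =
        ((3 * x ^ 2 + W.a₄) ^ 2 - 4 * y ^ 2 * (x₃ + 2 * x)) / (2 * y) ^ 2 := by
      have := left_ne_zero_of_mul hy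
      have := right_ne_zero_of_mul hy
      field_simp
      ring
    rw [← sub_eq_zero (a := _ - x - x), hx₃, div_eq_zero_iff, or_iff_left (pow_ne_zero 2 hy)]

lemma semaev3_eq_zero_iff_of_X_ne {x₁ y₁ x₂ y₂ x₃ y₃ : F} (hx : x₁ ≠ x₂)
    (h₁ : W.Nonsingular x₁ y₁) (h₂ : W.Nonsingular x₂ y₂) (h₃ : W.Nonsingular x₃ y₃) :
    semaev3 W.a₄ W.a₆ x₁ x₂ x₃ = 0 ↔
      (some _ _ h₁ + some _ _ h₂ = some _ _ h₃ ∨ some _ _ h₁ + some _ _ h₂ = -some _ _ h₃) ∨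
        (some _ _ h₁ - some _ _ h₂ = some _ _ h₃ ∨ some _ _ h₁ - some _ _ h₂ = -some _ _ h₃) := by
  have hd : (x₁ - x₂) ^ 2 ≠ 0 := pow_ne_zero 2 (sub_ne_zero.mpr hx)
  have hX (y : F) : W.addX x₁ x₂ (W.slope x₁ x₂ y₁ y) = x₃ ↔
      (x₁ - x₂) ^ 2 * (x₃ + x₁ + x₂) - (y₁ - y) ^ 2 = 0 := by
    rw [slope_of_X_ne hx, addX_of_isShortNF, eq_comm, ← sub_eq_zero,
      ← mul_eq_zero_iff_left hd]
    field_simp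
    constructor <;> intro h <;> linear_combination h
  rw [sub_eq_add_neg, some_add_some_eq_or_eq_neg_iff, neg_some h₂, some_add_some_eq_or_eq_neg_iff]
  simp only [hx, false_and, not_false_eq_true, true_and, hX, negY_of_isCharNeTwoNF,
    sub_neg_eq_add]
  rw [← mul_eq_zero_iff_left hd, sq_sub_mul_semaev3 ((equation_iff_of_isShortNF _ _).mp h₁.1)
    ((equation_iff_of_isShortNF _ _).mp h₂.1), mul_eq_zero]

lemma semaev3_eq_zero_iff {x₁ y₁ x₂ y₂ x₃ y₃ : F}
    (h₁ : W.Nonsingular x₁ y₁) (h₂ : W.Nonsingular x₂ y₂) (h₃ : W.Nonsingular x₃ y₃) :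
    semaev3 W.a₄ W.a₆ x₁ x₂ x₃ = 0 ↔
      (some _ _ h₁ + some _ _ h₂ = some _ _ h₃ ∨ some _ _ h₁ + some _ _ h₂ = -some _ _ h₃) ∨
        (some _ _ h₁ - some _ _ h₂ = some _ _ h₃ ∨ some _ _ h₁ - some _ _ h₂ = -some _ _ h₃) := by
  by_cases hx : x₁ = x₂
  · subst hx
    have hP₃ : (0 : W.Point) ≠ some _ _ h₃ ∧ (0 : W.Point) ≠ -some _ _ h₃ := by
      simp [(some_ne_zero h₃).symm]
    rcases (X_eq_iff (h₁ := h₂) (h₂ := h₁)).mp rfl with hP | hP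
    · rw [hP, sub_self, semaev3_self_eq_zero_iff h₁ h₃]
      simp [hP₃]
    · rw [hP, sub_neg_eq_add, add_neg_cancel, semaev3_self_eq_zero_iff h₁ h₃]
      simp [hP₃]
  · exact semaev3_eq_zero_iff_of_X_ne hx h₁ h₂ h₃

end Field

lemma map_map_map_eq_self {R S K : Type*} [CommRing R] [CommRing S] [Field K] [DecidableEq K]
    [Algebra R S] [Algebra R K] [Algebra S K] [IsScalarTower R S K] {W : Affine R}
    (f : K →ₐ[S] K) (hf : ∀ x, f (f (f x)) = x) (P : (W⁄K).Point) :
    map f (map f (map f P)) = P := by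
  cases P with
  | zero => rfl
  | some => simp [map_some, hf]

end Point

end WeierstrassCurve.Affine

open scoped Classical in
theorem traceZero_cubic_eq_semaev3_locus_general
    {Fq K : Type*} [Field Fq] [Fintype Fq] [Field K] [Fintype K] [Algebra Fq K]
    (hcard : Fintype.card K = Fintype.card Fq ^ 3)
    (A B : Fq)
    (W : WeierstrassCurve.Affine Fq) (hW : W = ⟨0, 0, 0, A, B⟩)
    (φ : K →ₐ[Fq] K) (hφ : ∀ x : K, φ x = x ^ Fintype.card Fq)
    (P : (W⁄K).Point) :
    P + Point.map (W' := W) φ P + Point.map (W' := W) φ (Point.map (W' := W) φ P) = 0 ↔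
      (P = 0 ∨
        ∃ (X Y : K) (h : (W.baseChange K).toAffine.Nonsingular X Y),
          P = Point.some _ _ h ∧
            semaev3 (algebraMap Fq K A) (algebraMap Fq K B) X (X ^ Fintype.card Fq)
              (X ^ Fintype.card Fq ^ 2) = 0) := by
  have : (W⁄K).IsShortNF := ⟨by simp [hW], by simp [hW], by simp [hW]⟩
  have ha₄ : W.a₄ = A := by rw [hW]
  have ha₆ : W.a₆ = B := by rw [hW]
  have hσ : ∀ Q, Point.map (W' := W) φ (Point.map φ (Point.map φ Q)) = Q :=
    Point.map_map_map_eq_self φ fun x => by simp only [hφ, FiniteField.pow_pow_pow_eq_self hcard]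
  rcases P with _ | ⟨X, Y, h⟩
  · simp [← Point.zero_def]
  · rw [(Point.map φ).add_apply_add_apply_apply_eq_zero_iff hσ, Point.map_some, Point.map_some,
      ← Point.semaev3_eq_zero_iff]
    simp [Point.some_ne_zero, hφ, ← pow_mul, sq, ha₄, ha₆, h]

open scoped Classical in
/-- Let `F_q` have characteristic `≠ 2, 3`, let `E : y² = x³ + Ax + B` be a
smooth elliptic curve over `F_q`, and let `T_3` be the trace zero subgroup of `E(F_{q³})`. Then
`T_3 = {(X,Y) ∈ E(F_{q³}) : f_3(X, X^q, X^{q²}) = 0} ∪ {O}`. -/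
theorem traceZero_cubic_eq_semaev3_locus
    {Fq K : Type*} [Field Fq] [Fintype Fq] [Field K] [Fintype K] [Algebra Fq K]
    (hcard : Fintype.card K = Fintype.card Fq ^ 3)
    (hchar2 : ringChar Fq ≠ 2) (hchar3 : ringChar Fq ≠ 3)
    (A B : Fq) (hAB : 4 * A ^ 3 + 27 * B ^ 2 ≠ 0)
    (W : WeierstrassCurve.Affine Fq) (hW : W = ⟨0, 0, 0, A, B⟩)
    (φ : K →ₐ[Fq] K) (hφ : ∀ x : K, φ x = x ^ Fintype.card Fq)
    (P : (W⁄K).Point) :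
    P + Point.map (W' := W) φ P + Point.map (W' := W) φ (Point.map (W' := W) φ P) = 0 ↔
      (P = 0 ∨
        ∃ (X Y : K) (h : (W.baseChange K).toAffine.Nonsingular X Y),
          P = Point.some _ _ h ∧
            semaev3 (algebraMap Fq K A) (algebraMap Fq K B) X (X ^ Fintype.card Fq)
              (X ^ Fintype.card Fq ^ 2) = 0) :=
  traceZero_cubic_eq_semaev3_locus_general hcard A B W hW φ hφ P
end

section
/- Let E be an elliptic curve over F_q and let P ∈ E(F_{q^3}). If there exist signs ε_1, ε_2 ∈ {+1, −1} such that P + ε_1 φ(P) + ε_2 φ²(P) = O, then P + φ(P) + φ²(P) = O, i.e. P lies in the trace zero subgroup T_3. In particular, if P − φ(P) + φ²(P) = O then 2P = O. -/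
open WeierstrassCurve.Affine
open scoped Classical

/-!
Write `σ` for the automorphism of `E(F_{q³})` induced by Frobenius; it is additive and `σ³ = 1`.
Applying `σ` to a relation `P + ε₁ σP + ε₂ σ²P = 0` with `(ε₁, ε₂) ≠ (1, 1)` and adding the result
to the relation leaves twice one of `P`, `σP`, `σ²P`, so all three are `2`-torsion. On `2`-torsion
points the signs are irrelevant, and the relation becomes `P + σP + σ²P = 0`.
-/

section OrderThreeEndomorphism

variable {A : Type*} [AddCommGroup A] {σ : A →+ A}

theorem zsmul_eq_self_of_two_nsmul_eq_zero {ε : ℤ} (hε : ε = 1 ∨ ε = -1) {x : A}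
    (hx : 2 • x = 0) : ε • x = x := by
  rcases hε with rfl | rfl
  · exact one_zsmul x
  · rwa [neg_one_zsmul, neg_eq_iff_add_eq_zero, ← two_nsmul]

theorem two_nsmul_eq_zero_of_two_nsmul_map_eq_zero (hσ : ∀ x, σ (σ (σ x)) = x) {x : A}
    (h : 2 • σ x = 0) : 2 • x = 0 := by
  rw [← hσ x, ← map_nsmul, ← map_nsmul, h, map_zero, map_zero]

theorem two_nsmul_eq_zero_of_signed_orbit_sum_eq_zero (hσ : ∀ x, σ (σ (σ x)) = x)
    {ε₁ ε₂ : ℤ} (hε₁ : ε₁ = 1 ∨ ε₁ = -1) (hε₂ : ε₂ = 1 ∨ ε₂ = -1) (hne : ¬(ε₁ = 1 ∧ ε₂ = 1))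
    {x : A} (h : x + ε₁ • σ x + ε₂ • σ (σ x) = 0) : 2 • x = 0 := by
  have hσh : σ x + ε₁ • σ (σ x) + ε₂ • x = 0 := by
    simpa only [map_add, map_zsmul, hσ, map_zero] using congrArg σ h
  rcases hε₁ with rfl | rfl <;> rcases hε₂ with rfl | rfl
  · exact absurd ⟨rfl, rfl⟩ hne
  · apply two_nsmul_eq_zero_of_two_nsmul_map_eq_zero hσ
    linear_combination (norm := module) h + hσh
  · linear_combination (norm := module) h + hσh
  · apply two_nsmul_eq_zero_of_two_nsmul_map_eq_zero hσ
    apply two_nsmul_eq_zero_of_two_nsmul_map_eq_zero hσ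
    linear_combination (norm := module) -(h + hσh)

theorem orbit_sum_eq_zero_of_signed_orbit_sum_eq_zero (hσ : ∀ x, σ (σ (σ x)) = x)
    {ε₁ ε₂ : ℤ} (hε₁ : ε₁ = 1 ∨ ε₁ = -1) (hε₂ : ε₂ = 1 ∨ ε₂ = -1)
    {x : A} (h : x + ε₁ • σ x + ε₂ • σ (σ x) = 0) : x + σ x + σ (σ x) = 0 := by
  by_cases hone : ε₁ = 1 ∧ ε₂ = 1
  · obtain ⟨rfl, rfl⟩ := hone
    simpa only [one_zsmul] using h
  have hx := two_nsmul_eq_zero_of_signed_orbit_sum_eq_zero hσ hε₁ hε₂ hone h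
  have hσx : 2 • σ x = 0 := by rw [← map_nsmul, hx, map_zero]
  have hσσx : 2 • σ (σ x) = 0 := by rw [← map_nsmul, hσx, map_zero]
  rwa [zsmul_eq_self_of_two_nsmul_eq_zero hε₁ hσx,
    zsmul_eq_self_of_two_nsmul_eq_zero hε₂ hσσx] at h

end OrderThreeEndomorphism

namespace WeierstrassCurve.Affine.Point

variable {F K : Type*} [Field F] [Field K] [Algebra F K] {W : WeierstrassCurve.Affine F}

theorem map_algHomId (P : (W⁄K).Point) : map (W' := W) (AlgHom.id F K) P = P := by
  cases P <;> rfl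

theorem map_map_map_eq_self_of_pow_card [Fintype K] {q : ℕ} (hcard : Fintype.card K = q ^ 3)
    (φ : K →ₐ[F] K) (hφ : ∀ x, φ x = x ^ q) (P : (W⁄K).Point) :
    map (W' := W) φ (map (W' := W) φ (map (W' := W) φ P)) = P := by
  have hφ3 : (φ.comp φ).comp φ = AlgHom.id F K := by
    ext x
    simp only [AlgHom.comp_apply, hφ, AlgHom.id_apply, ← pow_mul]
    rw [show q * q * q = Fintype.card K by rw [hcard]; ring]
    exact FiniteField.pow_card x
  rw [map_map, map_map, hφ3, map_algHomId]

end WeierstrassCurve.Affine.Point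

theorem traceZero_of_sign_sum_eq_zero_cubic_general
    {Fq K : Type*} [Field Fq] [Fintype Fq] [Field K] [Fintype K] [Algebra Fq K]
    (hcard : Fintype.card K = Fintype.card Fq ^ 3)
    (W : WeierstrassCurve.Affine Fq)
    (φ : K →ₐ[Fq] K) (hφ : ∀ x : K, φ x = x ^ Fintype.card Fq)
    (P : (W⁄K).Point) (ε₁ ε₂ : ℤ)
    (hε₁ : ε₁ = 1 ∨ ε₁ = -1) (hε₂ : ε₂ = 1 ∨ ε₂ = -1)
    (h : P + ε₁ • Point.map (W' := W) φ P + ε₂ • Point.map (W' := W) φ (Point.map (W' := W) φ P) = 0) :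
    (P + Point.map (W' := W) φ P + Point.map (W' := W) φ (Point.map (W' := W) φ P) = 0) ∧
      (P - Point.map (W' := W) φ P + Point.map (W' := W) φ (Point.map (W' := W) φ P) = 0 → 2 • P = 0) := by
  have hσ := Point.map_map_map_eq_self_of_pow_card (W := W) hcard φ hφ
  refine ⟨orbit_sum_eq_zero_of_signed_orbit_sum_eq_zero hσ hε₁ hε₂ h, fun halt => ?_⟩
  refine two_nsmul_eq_zero_of_signed_orbit_sum_eq_zero hσ (ε₁ := -1) (ε₂ := 1)
    (Or.inr rfl) (Or.inl rfl) (by norm_num) ?_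
  simpa only [neg_one_zsmul, one_zsmul, ← sub_eq_add_neg] using halt

/-- Let `E` be an elliptic curve over `F_q` and `P ∈ E(F_{q³})`. If there are
signs `ε₁, ε₂ ∈ {+1, −1}` with `P + ε₁ φ(P) + ε₂ φ²(P) = O`, then `P + φ(P) + φ²(P) = O`, i.e.
`P ∈ T_3`. In particular, if `P − φ(P) + φ²(P) = O` then `2P = O`. -/
theorem traceZero_of_sign_sum_eq_zero_cubic
    {Fq K : Type*} [Field Fq] [Fintype Fq] [Field K] [Fintype K] [Algebra Fq K]
    (hcard : Fintype.card K = Fintype.card Fq ^ 3)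
    (W : WeierstrassCurve.Affine Fq) (hΔ : W.Δ ≠ 0)
    (φ : K →ₐ[Fq] K) (hφ : ∀ x : K, φ x = x ^ Fintype.card Fq)
    (P : (W⁄K).Point) (ε₁ ε₂ : ℤ)
    (hε₁ : ε₁ = 1 ∨ ε₁ = -1) (hε₂ : ε₂ = 1 ∨ ε₂ = -1)
    (h : P + ε₁ • Point.map (W' := W) φ P + ε₂ • Point.map (W' := W) φ (Point.map (W' := W) φ P) = 0) :
    (P + Point.map (W' := W) φ P + Point.map (W' := W) φ (Point.map (W' := W) φ P) = 0) ∧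
      (P - Point.map (W' := W) φ P + Point.map (W' := W) φ (Point.map (W' := W) φ P) = 0 → 2 • P = 0) :=
  traceZero_of_sign_sum_eq_zero_cubic_general hcard W φ hφ P ε₁ ε₂ hε₁ hε₂ h
end

section
/- Let E be an elliptic curve over F_q and let P ∈ E(F_{q^5}). Suppose there exist signs ε_1, ε_2, ε_3, ε_4 ∈ {+1, −1} such that P + ε_1 φ(P) + ε_2 φ²(P) + ε_3 φ³(P) + ε_4 φ⁴(P) = O. Then either P lies in the trace zero subgroup T_5, or P = Q + R for some Q ∈ E(F_q) with 3Q = O and some R ∈ E(F_{q^5}) with 2R = O and R ∈ T_5. -/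
/-!
Write `T = P + φP + ⋯ + φ⁴P`; it is fixed by `φ`, because `φ⁵` is the identity on `E(F_{q⁵})`.
Adding up the five Frobenius rotations of the relation gives `(1 + ε₁ + ⋯ + ε₄) T = O`, so `T = O`
unless `1 + Σ εᵢ = ±3`. In those cases some rotation of the relation reads `2P = T`, and
`P = (-T) + (P + T)` is the decomposition: `-T` is `φ`-fixed, hence rational over `F_q`, with
`3(-T) = O`, while `2(P + T) = 3T = O` and the trace of `P + T` is `6T = O`.
-/

open WeierstrassCurve.Affine

namespace AddMonoidHom

variable {A : Type*} [AddCommGroup A] (ψ : A →+ A)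

def quinticTrace (P : A) : A :=
  P + ψ P + ψ (ψ P) + ψ (ψ (ψ P)) + ψ (ψ (ψ (ψ P)))

variable {ψ}

lemma quinticTrace_add (P Q : A) :
    ψ.quinticTrace (P + Q) = ψ.quinticTrace P + ψ.quinticTrace Q := by
  simp only [quinticTrace, map_add]
  abel

lemma quinticTrace_eq_nsmul_of_map_eq_self {T : A} (hT : ψ T = T) :
    ψ.quinticTrace T = 5 • T := by
  simp only [quinticTrace, hT]
  abel

lemma map_quinticTrace (h5 : ∀ X, ψ (ψ (ψ (ψ (ψ X)))) = X) (P : A) :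
    ψ (ψ.quinticTrace P) = ψ.quinticTrace P := by
  simp only [quinticTrace, map_add, h5]
  abel

lemma exists_decomposition_of_two_smul_eq_quinticTrace (h5 : ∀ X, ψ (ψ (ψ (ψ (ψ X)))) = X)
    {P : A} (h3 : 3 • ψ.quinticTrace P = 0) (h2 : 2 • P = ψ.quinticTrace P) :
    ∃ Q R : A, ψ Q = Q ∧ 3 • Q = 0 ∧ 2 • R = 0 ∧ ψ.quinticTrace R = 0 ∧ P = Q + R := by
  set T := ψ.quinticTrace P
  have hT : ψ T = T := ψ.map_quinticTrace h5 P
  refine ⟨-T, P + T, by rw [map_neg, hT], by rw [smul_neg, h3, neg_zero], ?_, ?_, by abel⟩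
  · rw [smul_add, h2, ← succ_nsmul', h3]
  · rw [quinticTrace_add, quinticTrace_eq_nsmul_of_map_eq_self hT]
    linear_combination (norm := module) 2 • h3

lemma quinticTrace_eq_zero_or_of_signed_sum_eq_zero (h5 : ∀ X, ψ (ψ (ψ (ψ (ψ X)))) = X)
    {P : A} {ε₁ ε₂ ε₃ ε₄ : ℤ}
    (hε₁ : ε₁ = 1 ∨ ε₁ = -1) (hε₂ : ε₂ = 1 ∨ ε₂ = -1)
    (hε₃ : ε₃ = 1 ∨ ε₃ = -1) (hε₄ : ε₄ = 1 ∨ ε₄ = -1)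
    (h : P + ε₁ • ψ P + ε₂ • ψ (ψ P) + ε₃ • ψ (ψ (ψ P)) + ε₄ • ψ (ψ (ψ (ψ P))) = 0) :
    ψ.quinticTrace P = 0 ∨ (3 • ψ.quinticTrace P = 0 ∧ 2 • P = ψ.quinticTrace P) := by
  have h1 := congrArg ψ h
  have h2 := congrArg ψ h1
  have h3 := congrArg ψ h2
  have h4 := congrArg ψ h3
  simp only [map_add, map_zsmul, map_zero, h5] at h1 h2 h3 h4
  have hsum : (1 + ε₁ + ε₂ + ε₃ + ε₄) • ψ.quinticTrace P = 0 := by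
    unfold quinticTrace
    linear_combination (norm := module) h + h1 + h2 + h3 + h4
  unfold quinticTrace at hsum ⊢
  rcases hε₁ with rfl | rfl <;> rcases hε₂ with rfl | rfl <;>
    rcases hε₃ with rfl | rfl <;> rcases hε₄ with rfl | rfl
  -- If `1 + Σ εᵢ = ±3`, the rotation of `h` in which `P` carries the odd sign reads `2 • P = T`.
  all_goals first
    | exact .inl (by linear_combination (norm := module) h)
    | exact .inl (by linear_combination (norm := module) hsum)
    | exact .inl (by linear_combination (norm := module) -hsum)
    | refine .inr ⟨?_, ?_⟩
      · first
          | linear_combination (norm := module) hsum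
          | linear_combination (norm := module) -hsum
      · first
          | linear_combination (norm := module) h
          | linear_combination (norm := module) -h1
          | linear_combination (norm := module) -h2
          | linear_combination (norm := module) -h3
          | linear_combination (norm := module) -h4

end AddMonoidHom

theorem FiniteField.mem_range_algebraMap_of_pow_card_eq {K L : Type*} [Field K] [Fintype K]
    [Field L] [Finite L] [Algebra K L] {x : L} (hx : x ^ Fintype.card K = x) :
    x ∈ Set.range (algebraMap K L) := by
  rw [IsGalois.mem_range_algebraMap_iff_fixed]
  intro g
  obtain ⟨n, rfl⟩ := (bijective_frobeniusAlgEquivOfAlgebraic_pow K L).2 g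
  rw [AlgEquiv.coe_pow, coe_frobeniusAlgEquivOfAlgebraic]
  exact Function.iterate_fixed hx _

namespace WeierstrassCurve.Affine.Point

variable {R F K : Type*} [CommRing R] [Field F] [Field K] [Algebra R F] [Algebra R K]
  [Algebra F K] [IsScalarTower R F K] [DecidableEq K]
  {W : WeierstrassCurve.Affine R}

lemma map_eq_self_of_forall_apply_eq {g : K →ₐ[F] K} (hg : ∀ x, g x = x) (P : (W⁄K).Point) :
    map g P = P := by
  obtain rfl : g = AlgHom.id F K := AlgHom.ext hg
  cases P <;> rfl

lemma exists_baseChange_eq_of_map_eq_self [DecidableEq F] {g : K →ₐ[F] K}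
    (hg : ∀ x, g x = x → x ∈ Set.range (algebraMap F K)) {P : (W⁄K).Point} (hP : map g P = P) :
    ∃ P₀ : (W⁄F).Point, baseChange F K P₀ = P := by
  cases P with
  | zero => exact ⟨0, rfl⟩
  | some x y h =>
    obtain ⟨hx, hy⟩ := some.inj hP
    obtain ⟨x₀, rfl⟩ := hg x hx
    obtain ⟨y₀, rfl⟩ := hg y hy
    exact ⟨some _ _ ((W.baseChange_nonsingular (Algebra.ofId F K).injective ..).mp h), rfl⟩

end WeierstrassCurve.Affine.Point

open Classical in
theorem traceZero_or_decomposition_of_sign_sum_eq_zero_quintic_general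
    {Fq K : Type*} [Field Fq] [Fintype Fq] [Field K] [Fintype K] [Algebra Fq K]
    (hcard : Fintype.card K = Fintype.card Fq ^ 5)
    (W : WeierstrassCurve.Affine Fq)
    (φ : K →ₐ[Fq] K) (hφ : ∀ x : K, φ x = x ^ Fintype.card Fq)
    (P : (W⁄K).Point) (ε₁ ε₂ ε₃ ε₄ : ℤ)
    (hε₁ : ε₁ = 1 ∨ ε₁ = -1) (hε₂ : ε₂ = 1 ∨ ε₂ = -1)
    (hε₃ : ε₃ = 1 ∨ ε₃ = -1) (hε₄ : ε₄ = 1 ∨ ε₄ = -1)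
    (h : P + ε₁ • (⇑(Point.map (W' := W) φ))^[1] P + ε₂ • (⇑(Point.map (W' := W) φ))^[2] P +
        ε₃ • (⇑(Point.map (W' := W) φ))^[3] P + ε₄ • (⇑(Point.map (W' := W) φ))^[4] P = 0) :
    (P + (⇑(Point.map (W' := W) φ))^[1] P + (⇑(Point.map (W' := W) φ))^[2] P +
        (⇑(Point.map (W' := W) φ))^[3] P + (⇑(Point.map (W' := W) φ))^[4] P = 0) ∨
      ∃ Q R : (W⁄K).Point,
        (∃ Q₀ : (W⁄Fq).Point, Point.baseChange (W' := W) Fq K Q₀ = Q) ∧ 3 • Q = 0 ∧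
        2 • R = 0 ∧
        (R + (⇑(Point.map (W' := W) φ))^[1] R + (⇑(Point.map (W' := W) φ))^[2] R +
          (⇑(Point.map (W' := W) φ))^[3] R + (⇑(Point.map (W' := W) φ))^[4] R = 0) ∧
        P = Q + R := by
  have hφ5 : ∀ x, φ (φ (φ (φ (φ x)))) = x := fun x => by
    have hφ' : ⇑φ = (· ^ Fintype.card Fq) := funext hφ
    change (⇑φ)^[5] x = x
    rw [hφ', pow_iterate, ← hcard]
    exact FiniteField.pow_card x
  have h5 : ∀ X : (W⁄K).Point, Point.map φ (Point.map φ (Point.map φ (Point.map φ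
      (Point.map φ X)))) = X := fun X => by
    simp only [Point.map_map]
    exact Point.map_eq_self_of_forall_apply_eq hφ5 X
  simp only [Function.iterate_succ_apply', Function.iterate_zero_apply] at h ⊢
  refine (AddMonoidHom.quinticTrace_eq_zero_or_of_signed_sum_eq_zero h5 hε₁ hε₂ hε₃ hε₄ h).imp
    id fun ⟨h3, h2⟩ => ?_
  obtain ⟨Q, R, hQ, h3Q, h2R, hR, rfl⟩ :=
    AddMonoidHom.exists_decomposition_of_two_smul_eq_quinticTrace h5 h3 h2
  refine ⟨Q, R, Point.exists_baseChange_eq_of_map_eq_self (fun x hx => ?_) hQ, h3Q, h2R, hR, rfl⟩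
  exact FiniteField.mem_range_algebraMap_of_pow_card_eq (hφ x ▸ hx)

open Classical in
/-- Let `E` be an elliptic curve over `F_q` and `P ∈ E(F_{q⁵})`. If there are
signs `ε₁, ε₂, ε₃, ε₄ ∈ {+1, −1}` with `P + ε₁ φ(P) + ε₂ φ²(P) + ε₃ φ³(P) + ε₄ φ⁴(P) = O`, then
either `P ∈ T_5`, or `P = Q + R` with `Q ∈ E(F_q)`, `3Q = O`, `R ∈ E(F_{q⁵})`, `2R = O`,
`R ∈ T_5`. -/
theorem traceZero_or_decomposition_of_sign_sum_eq_zero_quintic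
    {Fq K : Type*} [Field Fq] [Fintype Fq] [Field K] [Fintype K] [Algebra Fq K]
    (hcard : Fintype.card K = Fintype.card Fq ^ 5)
    (W : WeierstrassCurve.Affine Fq) (hΔ : W.Δ ≠ 0)
    (φ : K →ₐ[Fq] K) (hφ : ∀ x : K, φ x = x ^ Fintype.card Fq)
    (P : (W⁄K).Point) (ε₁ ε₂ ε₃ ε₄ : ℤ)
    (hε₁ : ε₁ = 1 ∨ ε₁ = -1) (hε₂ : ε₂ = 1 ∨ ε₂ = -1)
    (hε₃ : ε₃ = 1 ∨ ε₃ = -1) (hε₄ : ε₄ = 1 ∨ ε₄ = -1)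
    (h : P + ε₁ • (⇑(Point.map (W' := W) φ))^[1] P + ε₂ • (⇑(Point.map (W' := W) φ))^[2] P +
        ε₃ • (⇑(Point.map (W' := W) φ))^[3] P + ε₄ • (⇑(Point.map (W' := W) φ))^[4] P = 0) :
    (P + (⇑(Point.map (W' := W) φ))^[1] P + (⇑(Point.map (W' := W) φ))^[2] P +
        (⇑(Point.map (W' := W) φ))^[3] P + (⇑(Point.map (W' := W) φ))^[4] P = 0) ∨
      ∃ Q R : (W⁄K).Point,
        (∃ Q₀ : (W⁄Fq).Point, Point.baseChange (W' := W) Fq K Q₀ = Q) ∧ 3 • Q = 0 ∧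
        2 • R = 0 ∧
        (R + (⇑(Point.map (W' := W) φ))^[1] R + (⇑(Point.map (W' := W) φ))^[2] R +
          (⇑(Point.map (W' := W) φ))^[3] R + (⇑(Point.map (W' := W) φ))^[4] R = 0) ∧
        P = Q + R :=
  traceZero_or_decomposition_of_sign_sum_eq_zero_quintic_general hcard W φ hφ P ε₁ ε₂ ε₃ ε₄ hε₁ hε₂
    hε₃ hε₄ h
end

section
/- Let E be an elliptic curve over F_q and let P ∈ E(F_{q^5}) satisfy P + φ(P) + φ²(P) + φ³(P) − φ⁴(P) = O. Then 2P is an F_q-rational point with 3(2P) = O, and P = Q + R where Q = −2P satisfies Q ∈ E(F_q) and 3Q = O, and R = 3P satisfies 2R = O and R + φ(R) + φ²(R) + φ³(R) + φ⁴(R) = O. -/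
/-!
Write `Pᵢ = φⁱ P`; since `φ⁵ = 1` on `E(F_{q⁵})`, applying `φ` to `P₀ + P₁ + P₂ + P₃ = P₄` gives
`P₁ + P₂ + P₃ + P₄ = P₀`. Subtracting, `2P₄ = 2P₀`, and applying `φ` once more, `φ(2P) = 2P`.
Doubling the hypothesis then reads `4(2P) = 2P`, i.e. `3(2P) = O`, and `R = 3P` is handled by
`∑ Pᵢ = P₄ + P₄ = 2P`.
-/

open WeierstrassCurve.Affine

theorem AlgHom.pow_eq_one_of_apply_eq_pow {R K : Type*} [CommSemiring R] [Field K] [Fintype K]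
    [Algebra R K] (φ : K →ₐ[R] K) {q n : ℕ} (hφ : ∀ x, φ x = x ^ q)
    (hcard : Fintype.card K = q ^ n) : φ ^ n = 1 := by
  ext x
  rw [AlgHom.coe_pow, funext hφ, pow_iterate, ← hcard]
  exact FiniteField.pow_card x

namespace WeierstrassCurve.Affine.Point

variable {R S K : Type*} [CommRing R] [CommRing S] [Field K] [DecidableEq K] [Algebra R S]
  [Algebra R K] [Algebra S K] [IsScalarTower R S K] {W' : WeierstrassCurve.Affine R}

lemma map_one (P : (W'⁄K).Point) : map (W' := W') (1 : K →ₐ[S] K) P = P := by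
  cases P <;> rfl

lemma iterate_map (φ : K →ₐ[S] K) (n : ℕ) :
    (⇑(map (W' := W') φ))^[n] = map (W' := W') (φ ^ n) := by
  induction n with
  | zero => exact funext fun P => (map_one P).symm
  | succ n ih => funext P; rw [Function.iterate_succ_apply', ih, map_map, pow_succ']; rfl

lemma iterate_map_eq_id {φ : K →ₐ[S] K} {n : ℕ} (hφ : φ ^ n = 1) :
    (⇑(map (W' := W') φ))^[n] = id := by
  rw [iterate_map, hφ]
  exact funext map_one

end WeierstrassCurve.Affine.Point

namespace OneMinusSignQuintic

variable {M : Type*} [AddCommGroup M] (f : M →+ M) {x : M}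

theorem two_nsmul_iterate_four_eq (hx : f^[5] x = x)
    (h : x + f^[1] x + f^[2] x + f^[3] x - f^[4] x = 0) : (2 : ℕ) • f^[4] x = (2 : ℕ) • x := by
  have hf := congrArg f h
  simp only [map_add, map_sub, map_zero, ← Function.iterate_succ_apply' f, hx] at hf
  simp only [Function.iterate_one] at h hf
  linear_combination (norm := abel) hf - h

theorem isFixedPt_two_nsmul (hx : f^[5] x = x)
    (h : x + f^[1] x + f^[2] x + f^[3] x - f^[4] x = 0) : Function.IsFixedPt f ((2 : ℕ) • x) := by
  have h₄ := congrArg f (two_nsmul_iterate_four_eq f hx h)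
  rw [map_nsmul, map_nsmul, ← Function.iterate_succ_apply' f, hx] at h₄
  rw [Function.IsFixedPt, map_nsmul, h₄]

theorem three_nsmul_two_nsmul_eq_zero (hx : f^[5] x = x)
    (h : x + f^[1] x + f^[2] x + f^[3] x - f^[4] x = 0) : (3 : ℕ) • (2 : ℕ) • x = 0 := by
  have hfix (n : ℕ) : f^[n] ((2 : ℕ) • x) = (2 : ℕ) • x :=
    (isFixedPt_two_nsmul f hx h).iterate n
  have h₂ : (2 : ℕ) • (x + f^[1] x + f^[2] x + f^[3] x - f^[4] x) = 0 := by rw [h, smul_zero]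
  simp only [smul_add, smul_sub, ← iterate_map_nsmul, hfix] at h₂
  linear_combination (norm := abel) h₂

theorem sum_iterate_eq_two_nsmul (hx : f^[5] x = x)
    (h : x + f^[1] x + f^[2] x + f^[3] x - f^[4] x = 0) :
    x + f^[1] x + f^[2] x + f^[3] x + f^[4] x = (2 : ℕ) • x := by
  linear_combination (norm := abel) h + two_nsmul_iterate_four_eq f hx h

theorem sum_iterate_three_nsmul_eq_zero (hx : f^[5] x = x)
    (h : x + f^[1] x + f^[2] x + f^[3] x - f^[4] x = 0) :
    (3 : ℕ) • x + f^[1] ((3 : ℕ) • x) + f^[2] ((3 : ℕ) • x) + f^[3] ((3 : ℕ) • x) +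
      f^[4] ((3 : ℕ) • x) = 0 := by
  simp only [iterate_map_nsmul, ← smul_add]
  rw [sum_iterate_eq_two_nsmul f hx h, three_nsmul_two_nsmul_eq_zero f hx h]

end OneMinusSignQuintic

open OneMinusSignQuintic

open Classical in
theorem decomposition_of_one_minus_sign_quintic_general
    {Fq K : Type*} [Field Fq] [Fintype Fq] [Field K] [Fintype K] [Algebra Fq K]
    (hcard : Fintype.card K = Fintype.card Fq ^ 5)
    (W : WeierstrassCurve.Affine Fq)
    (φ : K →ₐ[Fq] K) (hφ : ∀ x : K, φ x = x ^ Fintype.card Fq)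
    (P : (W⁄K).Point)
    (h : P + (⇑(Point.map (W' := W) φ))^[1] P + (⇑(Point.map (W' := W) φ))^[2] P +
        (⇑(Point.map (W' := W) φ))^[3] P - (⇑(Point.map (W' := W) φ))^[4] P = 0) :
    Point.map (W' := W) φ ((2 : ℕ) • P) = (2 : ℕ) • P ∧ (3 : ℕ) • ((2 : ℕ) • P) = 0 ∧
      P = -((2 : ℕ) • P) + (3 : ℕ) • P ∧
      Point.map (W' := W) φ (-((2 : ℕ) • P)) = -((2 : ℕ) • P) ∧ (3 : ℕ) • (-((2 : ℕ) • P)) = 0 ∧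
      (2 : ℕ) • ((3 : ℕ) • P) = 0 ∧
      ((3 : ℕ) • P + (⇑(Point.map (W' := W) φ))^[1] ((3 : ℕ) • P) +
        (⇑(Point.map (W' := W) φ))^[2] ((3 : ℕ) • P) + (⇑(Point.map (W' := W) φ))^[3] ((3 : ℕ) • P) +
        (⇑(Point.map (W' := W) φ))^[4] ((3 : ℕ) • P) = 0) := by
  have hP : (⇑(Point.map (W' := W) φ))^[5] P = P := by
    rw [Point.iterate_map_eq_id (φ.pow_eq_one_of_apply_eq_pow hφ hcard), id]
  have hfix := isFixedPt_two_nsmul _ hP h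
  have htors := three_nsmul_two_nsmul_eq_zero _ hP h
  refine ⟨hfix, htors, by abel, by rw [map_neg, hfix], by rw [smul_neg, htors, neg_zero], ?_,
    sum_iterate_three_nsmul_eq_zero _ hP h⟩
  rw [smul_comm, htors]

open Classical in
/-- Let `E` be an elliptic curve over `F_q` and `P ∈ E(F_{q⁵})` with
`P + φ(P) + φ²(P) + φ³(P) − φ⁴(P) = O`. Then `2P` is `F_q`-rational (i.e. `φ(2P) = 2P`) with
`3(2P) = O`, and `P = Q + R` where `Q = −2P` satisfies `Q ∈ E(F_q)` and `3Q = O`, and `R = 3P`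
satisfies `2R = O` and `R + φ(R) + φ²(R) + φ³(R) + φ⁴(R) = O`. -/
theorem decomposition_of_one_minus_sign_quintic
    {Fq K : Type*} [Field Fq] [Fintype Fq] [Field K] [Fintype K] [Algebra Fq K]
    (hcard : Fintype.card K = Fintype.card Fq ^ 5)
    (W : WeierstrassCurve.Affine Fq) (hΔ : W.Δ ≠ 0)
    (φ : K →ₐ[Fq] K) (hφ : ∀ x : K, φ x = x ^ Fintype.card Fq)
    (P : (W⁄K).Point)
    (h : P + (⇑(Point.map (W' := W) φ))^[1] P + (⇑(Point.map (W' := W) φ))^[2] P +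
        (⇑(Point.map (W' := W) φ))^[3] P - (⇑(Point.map (W' := W) φ))^[4] P = 0) :
    Point.map (W' := W) φ ((2 : ℕ) • P) = (2 : ℕ) • P ∧ (3 : ℕ) • ((2 : ℕ) • P) = 0 ∧
      P = -((2 : ℕ) • P) + (3 : ℕ) • P ∧
      Point.map (W' := W) φ (-((2 : ℕ) • P)) = -((2 : ℕ) • P) ∧ (3 : ℕ) • (-((2 : ℕ) • P)) = 0 ∧
      (2 : ℕ) • ((3 : ℕ) • P) = 0 ∧
      ((3 : ℕ) • P + (⇑(Point.map (W' := W) φ))^[1] ((3 : ℕ) • P) +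
        (⇑(Point.map (W' := W) φ))^[2] ((3 : ℕ) • P) + (⇑(Point.map (W' := W) φ))^[3] ((3 : ℕ) • P) +
        (⇑(Point.map (W' := W) φ))^[4] ((3 : ℕ) • P) = 0) :=
  decomposition_of_one_minus_sign_quintic_general hcard W φ hφ P h
end

section
/- Let E be an elliptic curve over F_q and let P ∈ E(F_{q^5}) satisfy P + φ(P) − φ²(P) + φ³(P) − φ⁴(P) = O. Then 2P = O, and consequently P + φ(P) + φ²(P) + φ³(P) + φ⁴(P) = O, i.e. P lies in the trace zero subgroup T_5. -/
/-!
Write `s(P) = P + φP − φ²P + φ³P − φ⁴P`. Since `φ⁵ = 1` on `E(F_{q⁵})`, the signs telescope in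
`s(P) + φ(s(P)) = 2φ(P)`, so `s(P) = O` gives `2φ(P) = O` and hence `2P = O`, `φ` being injective.
The trace then differs from `s(P)` by `2φ²(P) + 2φ⁴(P) = O`.
-/

open WeierstrassCurve.Affine

theorem iterate_eq_id_of_forall_eq_pow {K : Type*} [Field K] [Fintype K] {q n : ℕ}
    (hcard : Fintype.card K = q ^ n) (φ : K → K) (hφ : ∀ x, φ x = x ^ q) : φ^[n] = id := by
  funext x
  rw [funext hφ, pow_iterate, ← hcard]
  exact FiniteField.pow_card x

namespace WeierstrassCurve.Affine.Point

variable {R F : Type*} [CommRing R] [Field F] [DecidableEq F] [Algebra R F] {W' : Affine R}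

theorem map_iterate (φ : F →ₐ[R] F) (n : ℕ) (P : (W'⁄F).Point) :
    (⇑(map (W' := W') φ))^[n] P = map (φ ^ n) P := by
  induction n with
  | zero => cases P <;> rfl
  | succ n ih => rw [Function.iterate_succ_apply', ih, map_map, pow_succ']; rfl

theorem map_iterate_eq_id {φ : F →ₐ[R] F} {n : ℕ} (hφ : (⇑φ)^[n] = id) :
    (⇑(map (W' := W') φ))^[n] = id := by
  have hφn : φ ^ n = 1 := DFunLike.coe_injective (by rw [AlgHom.coe_pow, hφ]; rfl)
  funext P
  rw [map_iterate, hφn]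
  cases P <;> rfl

end WeierstrassCurve.Affine.Point

namespace AddMonoidHom

variable {G : Type*} [AddCommGroup G] (f : G →+ G) (P : G)

theorem two_nsmul_apply_eq_add_apply_of_iterate_five_eq_id (hf : (⇑f)^[5] = _root_.id) :
    2 • f P = (P + f^[1] P - f^[2] P + f^[3] P - f^[4] P) +
      f (P + f^[1] P - f^[2] P + f^[3] P - f^[4] P) := by
  have h5 : f (f (f (f (f P)))) = P := congrFun hf P
  simp only [Function.iterate_succ_apply', Function.iterate_zero_apply, map_add, map_sub, h5]
  abel

theorem two_nsmul_eq_zero_of_iterate_five_eq_id (hf : (⇑f)^[5] = _root_.id)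
    (h : P + f^[1] P - f^[2] P + f^[3] P - f^[4] P = 0) : 2 • P = 0 := by
  have hinj : Function.Injective f :=
    (Function.leftInverse_iff_comp.mpr (by rw [← Function.iterate_succ, hf])).injective
  apply hinj
  rw [map_nsmul, two_nsmul_apply_eq_add_apply_of_iterate_five_eq_id f P hf, h, map_zero,
    add_zero]

theorem add_iterate_eq_zero_of_two_nsmul_eq_zero (h2 : 2 • P = 0)
    (h : P + f^[1] P - f^[2] P + f^[3] P - f^[4] P = 0) :
    P + f^[1] P + f^[2] P + f^[3] P + f^[4] P = 0 := by
  have hf2 : 2 • f (f P) = 0 := by simp only [← map_nsmul, h2, map_zero]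
  have hf4 : 2 • f (f (f (f P))) = 0 := by simp only [← map_nsmul, h2, map_zero]
  calc P + f^[1] P + f^[2] P + f^[3] P + f^[4] P
      = (P + f^[1] P - f^[2] P + f^[3] P - f^[4] P) + 2 • f (f P) + 2 • f (f (f (f P))) := by
        simp only [Function.iterate_succ_apply', Function.iterate_zero_apply]
        abel
    _ = 0 := by rw [h, hf2, hf4, add_zero, add_zero]

end AddMonoidHom

open Classical in
theorem two_smul_eq_zero_of_two_minuses_not_in_a_row_quintic_general
    {Fq K : Type*} [Field Fq] [Fintype Fq] [Field K] [Fintype K] [Algebra Fq K]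
    (hcard : Fintype.card K = Fintype.card Fq ^ 5)
    (W : WeierstrassCurve.Affine Fq)
    (φ : K →ₐ[Fq] K) (hφ : ∀ x : K, φ x = x ^ Fintype.card Fq)
    (P : (W⁄K).Point)
    (h : P + (⇑(Point.map (W' := W) φ))^[1] P - (⇑(Point.map (W' := W) φ))^[2] P +
        (⇑(Point.map (W' := W) φ))^[3] P - (⇑(Point.map (W' := W) φ))^[4] P = 0) :
    (2 : ℕ) • P = 0 ∧
      P + (⇑(Point.map (W' := W) φ))^[1] P + (⇑(Point.map (W' := W) φ))^[2] P +
        (⇑(Point.map (W' := W) φ))^[3] P + (⇑(Point.map (W' := W) φ))^[4] P = 0 := by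
  have hφ5 : (⇑(Point.map (W' := W) φ))^[5] = id :=
    Point.map_iterate_eq_id (iterate_eq_id_of_forall_eq_pow hcard φ hφ)
  have h2 : (2 : ℕ) • P = 0 := (Point.map φ).two_nsmul_eq_zero_of_iterate_five_eq_id P hφ5 h
  exact ⟨h2, (Point.map φ).add_iterate_eq_zero_of_two_nsmul_eq_zero P h2 h⟩

open Classical in
/-- Let `E` be an elliptic curve over `F_q` and `P ∈ E(F_{q⁵})` with
`P + φ(P) − φ²(P) + φ³(P) − φ⁴(P) = O`. Then `2P = O`, and consequently
`P + φ(P) + φ²(P) + φ³(P) + φ⁴(P) = O`, i.e. `P ∈ T_5`. -/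
theorem two_smul_eq_zero_of_two_minuses_not_in_a_row_quintic
    {Fq K : Type*} [Field Fq] [Fintype Fq] [Field K] [Fintype K] [Algebra Fq K]
    (hcard : Fintype.card K = Fintype.card Fq ^ 5)
    (W : WeierstrassCurve.Affine Fq) (hΔ : W.Δ ≠ 0)
    (φ : K →ₐ[Fq] K) (hφ : ∀ x : K, φ x = x ^ Fintype.card Fq)
    (P : (W⁄K).Point)
    (h : P + (⇑(Point.map (W' := W) φ))^[1] P - (⇑(Point.map (W' := W) φ))^[2] P +
        (⇑(Point.map (W' := W) φ))^[3] P - (⇑(Point.map (W' := W) φ))^[4] P = 0) :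
    (2 : ℕ) • P = 0 ∧
      P + (⇑(Point.map (W' := W) φ))^[1] P + (⇑(Point.map (W' := W) φ))^[2] P +
        (⇑(Point.map (W' := W) φ))^[3] P + (⇑(Point.map (W' := W) φ))^[4] P = 0 :=
  two_smul_eq_zero_of_two_minuses_not_in_a_row_quintic_general hcard W φ hφ P h
end

section
/- Let F_q be a finite field of characteristic different from 2 and 3, let E : y² = x³ + Ax + B be a smooth elliptic curve over F_q, and let P = (X, Y) be a point of the trace zero subgroup T_3 ⊂ E(F_{q^3}) with P ≠ O. Define S_1 = X + X^q + X^{q^2}, S_2 = X^{1+q} + X^{1+q^2} + X^{q+q^2}, and S_3 = X^{1+q+q^2}. Then S_2² − 4 S_1 S_3 − 4B S_1 − 2A S_2 + A² = 0. -/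
/-!
If `P₁ + P₂ + P₃ = O` on `y² = x³ + a x + b` with no `Pᵢ = O`, the three points lie on one line
`y = ℓ x + m` (counted with multiplicity), so substituting the line into the curve equation gives
`x³ + a x + b - (ℓ x + m)² = (x - x₁)(x - x₂)(x - x₃)`. Comparing coefficients,
`e₁ = ℓ²`, `e₂ = a - 2ℓm`, `e₃ = m² - b` for the elementary symmetric functions `eᵢ` of the `xᵢ`,
and eliminating `ℓ, m` from `(e₂ - a)² = 4ℓ²m² = 4 e₁ (e₃ + b)` gives the third summation
polynomial. For `P ∈ T₃` apply this to `P, φ(P), φ²(P)`, whose `x`-coordinates are `X, X^q, X^{q²}`.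
-/

open WeierstrassCurve.Affine

/-- The third summation polynomial of `y² = x³ + a x + b`, written in the elementary symmetric
functions of `x₁, x₂, x₃`. -/
def semaev₃ {R : Type*} [CommRing R] (a b x₁ x₂ x₃ : R) : R :=
  (x₁ * x₂ + x₁ * x₃ + x₂ * x₃) ^ 2 - 4 * (x₁ + x₂ + x₃) * (x₁ * x₂ * x₃)
    - 4 * b * (x₁ + x₂ + x₃) - 2 * a * (x₁ * x₂ + x₁ * x₃ + x₂ * x₃) + a ^ 2

lemma semaev₃_eq_zero_of_vieta {R : Type*} [CommRing R] {a b x₁ x₂ x₃ ℓ m : R}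
    (he₁ : x₁ + x₂ + x₃ = ℓ ^ 2) (he₂ : x₁ * x₂ + x₁ * x₃ + x₂ * x₃ = a - 2 * ℓ * m)
    (he₃ : x₁ * x₂ * x₃ = m ^ 2 - b) :
    semaev₃ a b x₁ x₂ x₃ = 0 := by
  unfold semaev₃
  linear_combination (x₁ * x₂ + x₁ * x₃ + x₂ * x₃ - 2 * ℓ * m - a) * he₂
    - 4 * (x₁ * x₂ * x₃ + b) * he₁ - 4 * ℓ ^ 2 * he₃

section ShortWeierstrass

variable {F : Type*} [Field F] [DecidableEq F] {W : WeierstrassCurve.Affine F} [W.IsShortNF]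

lemma semaev₃_addX_slope_eq_zero {x₁ x₂ y₁ y₂ : F} (h₁ : W.Equation x₁ y₁)
    (h₂ : W.Equation x₂ y₂) (hxy : ¬(x₁ = x₂ ∧ y₁ = W.negY x₂ y₂)) :
    semaev₃ W.a₄ W.a₆ x₁ x₂ (W.addX x₁ x₂ (W.slope x₁ x₂ y₁ y₂)) = 0 := by
  have hcubic := addPolynomial_slope h₁ h₂ hxy
  rw [addPolynomial_eq, neg_inj, Cubic.prod_X_sub_C_eq, Cubic.toPoly_injective] at hcubic
  simp only [Cubic.mk.injEq, W.a₁_of_isShortNF, W.a₂_of_isShortNF, W.a₃_of_isShortNF] at hcubic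
  obtain ⟨-, he₁, he₂, he₃⟩ := hcubic
  exact semaev₃_eq_zero_of_vieta (ℓ := W.slope x₁ x₂ y₁ y₂) (m := y₁ - x₁ * W.slope x₁ x₂ y₁ y₂)
    (by linear_combination he₁) (by linear_combination -he₂) (by linear_combination he₃)

theorem semaev₃_eq_zero_of_some_add_some_add_some_eq_zero {x₁ x₂ x₃ y₁ y₂ y₃ : F}
    {h₁ : W.Nonsingular x₁ y₁} {h₂ : W.Nonsingular x₂ y₂} {h₃ : W.Nonsingular x₃ y₃}
    (hsum : Point.some _ _ h₁ + Point.some _ _ h₂ + Point.some _ _ h₃ = 0) :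
    semaev₃ W.a₄ W.a₆ x₁ x₂ x₃ = 0 := by
  rw [add_eq_zero_iff_eq_neg, Point.neg_some] at hsum
  have hxy : ¬(x₁ = x₂ ∧ y₁ = W.negY x₂ y₂) := fun ⟨hx, hy⟩ ↦
    Point.some_ne_zero _ ((Point.add_of_Y_eq hx hy).symm.trans hsum).symm
  rw [Point.add_some hxy, Point.some.injEq] at hsum
  rw [← hsum.1]
  exact semaev₃_addX_slope_eq_zero h₁.1 h₂.1 hxy

end ShortWeierstrass

open Classical in
theorem symmetrized_semaev3_vanishes_on_traceZero_general
    {Fq K : Type*} [Field Fq] [Field K] [Algebra Fq K]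
    (q : ℕ)
    (A B : Fq)
    (W : WeierstrassCurve.Affine Fq) (hW : W = ⟨0, 0, 0, A, B⟩)
    (φ : K →ₐ[Fq] K) (hφ : ∀ x : K, φ x = x ^ q)
    (X Y : K) (h : (W.baseChange K).toAffine.Nonsingular X Y)
    (P : (W⁄K).Point) (hP : P = Point.some X Y h)
    (htr : P + Point.map (W' := W) φ P + Point.map (W' := W) φ (Point.map (W' := W) φ P) = 0)
    (S₁ S₂ S₃ : K)
    (hS₁ : S₁ = X + X ^ q + X ^ q ^ 2)
    (hS₂ : S₂ = X ^ (1 + q) + X ^ (1 + q ^ 2) + X ^ (q + q ^ 2))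
    (hS₃ : S₃ = X ^ (1 + q + q ^ 2)) :
    S₂ ^ 2 - 4 * S₁ * S₃ - 4 * algebraMap Fq K B * S₁ - 2 * algebraMap Fq K A * S₂ +
      algebraMap Fq K A ^ 2 = 0 := by
  have : (W⁄K).IsShortNF := by subst hW; exact ⟨map_zero _, map_zero _, map_zero _⟩
  subst hW hP
  rw [Point.map_some, Point.map_some] at htr
  have hsemaev := semaev₃_eq_zero_of_some_add_some_add_some_eq_zero htr
  have hφ₂ : φ (φ X) = X ^ q ^ 2 := by rw [hφ, hφ, ← pow_mul, sq]
  rw [hφ₂, hφ] at hsemaev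
  rw [hS₁, hS₂, hS₃]
  simp only [pow_add, pow_one]
  unfold semaev₃ at hsemaev
  change _ - 4 * algebraMap Fq K B * _ - 2 * algebraMap Fq K A * _ + algebraMap Fq K A ^ 2 = 0
    at hsemaev
  linear_combination hsemaev

open Classical in
/-- Let `F_q` have characteristic `≠ 2, 3`, let `E : y² = x³ + Ax + B` be a
smooth elliptic curve over `F_q`, and let `P = (X, Y) ≠ O` be a point of the trace zero subgroup
`T_3 ⊆ E(F_{q³})`. With `S₁ = X + X^q + X^{q²}`, `S₂ = X^{1+q} + X^{1+q²} + X^{q+q²}` and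
`S₃ = X^{1+q+q²}`, one has `S₂² − 4 S₁ S₃ − 4B S₁ − 2A S₂ + A² = 0`. -/
theorem symmetrized_semaev3_vanishes_on_traceZero
    {Fq K : Type*} [Field Fq] [Fintype Fq] [Field K] [Fintype K] [Algebra Fq K]
    (q : ℕ) (hq : q = Fintype.card Fq)
    (hcard : Fintype.card K = q ^ 3)
    (hchar2 : ringChar Fq ≠ 2) (hchar3 : ringChar Fq ≠ 3)
    (A B : Fq) (hAB : 4 * A ^ 3 + 27 * B ^ 2 ≠ 0)
    (W : WeierstrassCurve.Affine Fq) (hW : W = ⟨0, 0, 0, A, B⟩)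
    (φ : K →ₐ[Fq] K) (hφ : ∀ x : K, φ x = x ^ q)
    (X Y : K) (h : (W.baseChange K).toAffine.Nonsingular X Y)
    (P : (W⁄K).Point) (hP : P = Point.some X Y h)
    (htr : P + Point.map (W' := W) φ P + Point.map (W' := W) φ (Point.map (W' := W) φ P) = 0)
    (S₁ S₂ S₃ : K)
    (hS₁ : S₁ = X + X ^ q + X ^ q ^ 2)
    (hS₂ : S₂ = X ^ (1 + q) + X ^ (1 + q ^ 2) + X ^ (q + q ^ 2))
    (hS₃ : S₃ = X ^ (1 + q + q ^ 2)) :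
    S₂ ^ 2 - 4 * S₁ * S₃ - 4 * algebraMap Fq K B * S₁ - 2 * algebraMap Fq K A * S₂ +
      algebraMap Fq K A ^ 2 = 0 :=
  symmetrized_semaev3_vanishes_on_traceZero_general q A B W hW φ hφ X Y h P hP htr S₁ S₂ S₃ hS₁ hS₂
    hS₃
end

section
/- Let F_q be a finite field of characteristic different from 2 and 3, and let E : y² = x³ + Ax + B be a smooth elliptic curve over F_q. For a point P = (X,Y) ∈ T_3 with P ≠ O, write S_1(P) = X + X^q + X^{q^2}, S_2(P) = X^{1+q} + X^{1+q^2} + X^{q+q^2}, S_3(P) = X^{1+q+q^2}. If P, P' ∈ T_3 \ {O} satisfy S_1(P) = S_1(P') ≠ 0 and S_2(P) = S_2(P'), then S_3(P) = S_3(P'); indeed, S_3(P) = (S_2(P)² − 2A S_2(P) − 4B S_1(P) + A²) / (4 S_1(P)). -/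
/-!
Since `P + φ P + φ² P = O`, the three points lie on a line `y = ℓ x + ν`, so their `x`-coordinates
are the roots of `x³ + A x + B - (ℓ x + ν)²`. By Vieta, `S₁ = ℓ²`, `S₂ = A - 2 ℓ ν` and
`S₃ = ν² - B`; eliminating `ℓ` and `ν` gives `(S₂ - A)² = 4 ℓ² ν² = 4 S₁ (S₃ + B)`, which determines
`S₃` as soon as `4 S₁ ≠ 0`.
-/

open WeierstrassCurve.Affine

namespace WeierstrassCurve.Affine

variable {F : Type*} [Field F] [DecidableEq F] {W : WeierstrassCurve.Affine F}

theorem exists_line_of_add_add_eq_zero {x₁ x₂ x₃ y₁ y₂ y₃ : F} {h₁ : W.Nonsingular x₁ y₁}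
    {h₂ : W.Nonsingular x₂ y₂} {h₃ : W.Nonsingular x₃ y₃}
    (hsum : Point.some _ _ h₁ + Point.some _ _ h₂ + Point.some _ _ h₃ = 0) :
    ∃ ℓ ν : F, x₁ + x₂ + x₃ = ℓ ^ 2 + W.a₁ * ℓ - W.a₂ ∧
      x₁ * x₂ + x₁ * x₃ + x₂ * x₃ = W.a₄ - 2 * ℓ * ν - W.a₁ * ν - W.a₃ * ℓ ∧
      x₁ * x₂ * x₃ = ν ^ 2 + W.a₃ * ν - W.a₆ := by
  have hxy : ¬(x₁ = x₂ ∧ y₁ = W.negY x₂ y₂) := fun hxy ↦ by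
    rw [Point.add_of_Y_eq hxy.1 hxy.2, zero_add] at hsum
    exact Point.some_ne_zero h₃ hsum
  rw [Point.add_some hxy, add_eq_zero_iff_eq_neg', Point.neg_some, Point.some.injEq] at hsum
  have hcubic := addPolynomial_slope h₁.1 h₂.1 hxy
  rw [← hsum.1, addPolynomial_eq, Cubic.prod_X_sub_C_eq, neg_inj, Cubic.toPoly_injective,
    Cubic.mk.injEq] at hcubic
  obtain ⟨-, hc₂, hc₁, hc₀⟩ := hcubic
  refine ⟨W.slope x₁ x₂ y₁ y₂, y₁ - W.slope x₁ x₂ y₁ y₂ * x₁, ?_, ?_, ?_⟩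
  · linear_combination hc₂
  · linear_combination -hc₁
  · linear_combination hc₀

theorem four_mul_sum_mul_prod_eq_of_add_add_eq_zero (ha₁ : W.a₁ = 0) (ha₂ : W.a₂ = 0)
    (ha₃ : W.a₃ = 0) {x₁ x₂ x₃ y₁ y₂ y₃ : F} {h₁ : W.Nonsingular x₁ y₁}
    {h₂ : W.Nonsingular x₂ y₂} {h₃ : W.Nonsingular x₃ y₃}
    (hsum : Point.some _ _ h₁ + Point.some _ _ h₂ + Point.some _ _ h₃ = 0) :
    4 * (x₁ + x₂ + x₃) * (x₁ * x₂ * x₃) =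
      (x₁ * x₂ + x₁ * x₃ + x₂ * x₃) ^ 2 - 2 * W.a₄ * (x₁ * x₂ + x₁ * x₃ + x₂ * x₃)
        - 4 * W.a₆ * (x₁ + x₂ + x₃) + W.a₄ ^ 2 := by
  obtain ⟨ℓ, ν, he₁, he₂, he₃⟩ := exists_line_of_add_add_eq_zero hsum
  rw [ha₁, ha₂] at he₁
  rw [ha₁, ha₃] at he₂
  rw [ha₃] at he₃
  linear_combination (4 * (x₁ * x₂ * x₃) + 4 * W.a₆) * he₁ + 4 * ℓ ^ 2 * he₃
    - (x₁ * x₂ + x₁ * x₃ + x₂ * x₃ - W.a₄ - 2 * ℓ * ν) * he₂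

end WeierstrassCurve.Affine

theorem four_mul_sum_mul_prod_frobenius_eq_of_trace_zero {F K : Type*} [Field F] [Field K]
    [Algebra F K] [DecidableEq K] {A B : F} {q : ℕ} {φ : K →ₐ[F] K} (hφ : ∀ x, φ x = x ^ q)
    {X Y : K}
    {h : ((⟨0, 0, 0, A, B⟩ : WeierstrassCurve.Affine F).baseChange K).toAffine.Nonsingular X Y}
    (htr : Point.some _ _ h + Point.map φ (Point.some _ _ h)
      + Point.map φ (Point.map φ (Point.some _ _ h)) = 0) :
    4 * (X + X ^ q + X ^ q ^ 2) * X ^ (1 + q + q ^ 2) =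
      (X ^ (1 + q) + X ^ (1 + q ^ 2) + X ^ (q + q ^ 2)) ^ 2
        - 2 * algebraMap F K A * (X ^ (1 + q) + X ^ (1 + q ^ 2) + X ^ (q + q ^ 2))
        - 4 * algebraMap F K B * (X + X ^ q + X ^ q ^ 2) + algebraMap F K A ^ 2 := by
  simp only [Point.map_some] at htr
  have hrel := four_mul_sum_mul_prod_eq_of_add_add_eq_zero (by simp) (by simp) (by simp) htr
  simp only [hφ, ← pow_mul, ← sq] at hrel
  simp only [pow_add, pow_one]
  exact hrel

open Classical in
theorem third_symmetric_function_determined_general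
    {Fq K : Type*} [Field Fq] [Field K] [Algebra Fq K]
    (q : ℕ)
    (hchar2 : ringChar Fq ≠ 2)
    (A B : Fq)
    (W : WeierstrassCurve.Affine Fq) (hW : W = ⟨0, 0, 0, A, B⟩)
    (φ : K →ₐ[Fq] K) (hφ : ∀ x : K, φ x = x ^ q)
    (X Y X' Y' : K)
    (h : (W.baseChange K).toAffine.Nonsingular X Y)
    (h' : (W.baseChange K).toAffine.Nonsingular X' Y')
    (P P' : (W.baseChange K).Point) (hP : P = Point.some _ _ h) (hP' : P' = Point.some _ _ h')
    (htr : P + Point.map (W' := W) φ P + Point.map (W' := W) φ (Point.map (W' := W) φ P) = 0)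
    (htr' : P' + Point.map (W' := W) φ P' + Point.map (W' := W) φ (Point.map (W' := W) φ P') = 0)
    (S₁ S₂ S₃ S₁' S₂' S₃' : K)
    (hS₁ : S₁ = X + X ^ q + X ^ q ^ 2)
    (hS₂ : S₂ = X ^ (1 + q) + X ^ (1 + q ^ 2) + X ^ (q + q ^ 2))
    (hS₃ : S₃ = X ^ (1 + q + q ^ 2))
    (hS₁' : S₁' = X' + X' ^ q + X' ^ q ^ 2)
    (hS₂' : S₂' = X' ^ (1 + q) + X' ^ (1 + q ^ 2) + X' ^ (q + q ^ 2))
    (hS₃' : S₃' = X' ^ (1 + q + q ^ 2))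
    (hne : S₁ ≠ 0) (h₁₁ : S₁ = S₁') (h₂₂ : S₂ = S₂') :
    S₃ = S₃' ∧
      S₃ = (S₂ ^ 2 - 2 * algebraMap Fq K A * S₂ - 4 * algebraMap Fq K B * S₁ +
        algebraMap Fq K A ^ 2) / (4 * S₁) := by
  subst hP hP' hW
  have hrel := four_mul_sum_mul_prod_frobenius_eq_of_trace_zero hφ htr
  have hrel' := four_mul_sum_mul_prod_frobenius_eq_of_trace_zero hφ htr'
  rw [← hS₁, ← hS₂, ← hS₃] at hrel
  rw [← hS₁', ← hS₂', ← hS₃', ← h₁₁, ← h₂₂] at hrel'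
  have h2 : (2 : K) ≠ 0 := Ring.two_ne_zero (by rwa [← Algebra.ringChar_eq Fq K])
  have h4 : (4 : K) * S₁ ≠ 0 := by
    rw [show (4 : K) = 2 * 2 by norm_num]
    exact mul_ne_zero (mul_ne_zero h2 h2) hne
  refine ⟨mul_left_cancel₀ h4 ?_, (eq_div_iff h4).2 ?_⟩
  · linear_combination hrel - hrel'
  · linear_combination hrel

open Classical in
/-- Let `F_q` have characteristic `≠ 2, 3` and `E : y² = x³ + Ax + B` be a
smooth elliptic curve over `F_q`. For `P = (X,Y) ∈ T_3 \ {O}` write `S₁(P) = X + X^q + X^{q²}`,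
`S₂(P) = X^{1+q} + X^{1+q²} + X^{q+q²}`, `S₃(P) = X^{1+q+q²}`. If `P, P' ∈ T_3 \ {O}` satisfy
`S₁(P) = S₁(P') ≠ 0` and `S₂(P) = S₂(P')`, then `S₃(P) = S₃(P')`; indeed
`S₃(P) = (S₂(P)² − 2A S₂(P) − 4B S₁(P) + A²) / (4 S₁(P))`. -/
theorem third_symmetric_function_determined
    {Fq K : Type*} [Field Fq] [Fintype Fq] [Field K] [Fintype K] [Algebra Fq K]
    (q : ℕ) (hq : q = Fintype.card Fq)
    (hcard : Fintype.card K = q ^ 3)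
    (hchar2 : ringChar Fq ≠ 2) (hchar3 : ringChar Fq ≠ 3)
    (A B : Fq) (hAB : 4 * A ^ 3 + 27 * B ^ 2 ≠ 0)
    (W : WeierstrassCurve.Affine Fq) (hW : W = ⟨0, 0, 0, A, B⟩)
    (φ : K →ₐ[Fq] K) (hφ : ∀ x : K, φ x = x ^ q)
    (X Y X' Y' : K)
    (h : (W.baseChange K).toAffine.Nonsingular X Y)
    (h' : (W.baseChange K).toAffine.Nonsingular X' Y')
    (P P' : (W.baseChange K).Point) (hP : P = Point.some _ _ h) (hP' : P' = Point.some _ _ h')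
    (htr : P + Point.map (W' := W) φ P + Point.map (W' := W) φ (Point.map (W' := W) φ P) = 0)
    (htr' : P' + Point.map (W' := W) φ P' + Point.map (W' := W) φ (Point.map (W' := W) φ P') = 0)
    (S₁ S₂ S₃ S₁' S₂' S₃' : K)
    (hS₁ : S₁ = X + X ^ q + X ^ q ^ 2)
    (hS₂ : S₂ = X ^ (1 + q) + X ^ (1 + q ^ 2) + X ^ (q + q ^ 2))
    (hS₃ : S₃ = X ^ (1 + q + q ^ 2))
    (hS₁' : S₁' = X' + X' ^ q + X' ^ q ^ 2)
    (hS₂' : S₂' = X' ^ (1 + q) + X' ^ (1 + q ^ 2) + X' ^ (q + q ^ 2))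
    (hS₃' : S₃' = X' ^ (1 + q + q ^ 2))
    (hne : S₁ ≠ 0) (h₁₁ : S₁ = S₁') (h₂₂ : S₂ = S₂') :
    S₃ = S₃' ∧
      S₃ = (S₂ ^ 2 - 2 * algebraMap Fq K A * S₂ - 4 * algebraMap Fq K B * S₁ +
        algebraMap Fq K A ^ 2) / (4 * S₁) :=
  third_symmetric_function_determined_general q hchar2 A B W hW φ hφ X Y X' Y' h h' P P' hP hP' htr
    htr' S₁ S₂ S₃ S₁' S₂' S₃' hS₁ hS₂ hS₃ hS₁' hS₂' hS₃' hne h₁₁ h₂₂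
end
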